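/- arXiv:1510.04266 — 2 statements merged into one kernel-verified Lean document; each statement's English description precedes it below -/
import Mathlib

section
/- Let Γ ⊆ Λ⁺ be a submonoid and let Σ be any subset of ℤΓ. Define V := {ν ∈ Hom(ℤΓ,ℚ) : ⟨ν,σ⟩ ≤ 0 for all σ ∈ Σ}. Then among all subsets F of S such that the relative interior of the convex cone spanned by {α^∨|_{ℤΓ} : α ∈ F} in Hom(ℤΓ,ℚ) intersects V, there is a unique one, denoted S_Γ, that contains all the others; moreover S_Γ equals the union of all such subsets F. (This is Proposition 1.7/4.1 of the paper, where Σ is taken to be the set Σ^N(Γ) of N-spherical roots; the proof works for an arbitrary subset Σ of ℤΓ.) -/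
/-- The relative interior of the convex cone spanned by the finite family
`f i, i ∈ F`, in a `ℚ`-vector space (its interior inside its linear span):
for a finitely generated convex cone this is exactly the set of *strictly*
positive rational combinations of the generators. -/
def coneRelintFam {ι M : Type*} [AddCommGroup M] [Module ℚ M]
    (F : Finset ι) (f : ι → M) : Set M :=
  {y | ∃ c : ι → ℚ, (∀ i ∈ F, 0 < c i) ∧ y = ∑ i ∈ F, c i • f i}

/-- The set of dominant weights `Λ⁺ = {λ ∈ Λ : ⟨α^∨, λ⟩ ≥ 0 for all α ∈ S}`. -/
def dominant {V : Type*} [AddCommGroup V] [Module ℚ V]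
    (S : Finset V) (coroot : V → V →ₗ[ℚ] ℚ) (Λ : AddSubgroup V) : Set V :=
  {v | v ∈ Λ ∧ ∀ α ∈ S, 0 ≤ coroot α v}

/-- `F ⊆ S` is "good" if the relative interior of the convex cone spanned by
`{α^∨|_{ℤΓ} : α ∈ F}` inside `Hom(ℤΓ, ℚ)` (identified with the `ℚ`-linear dual of
the `ℚ`-span of `Γ`, since `ℤΓ` spans it) meets
`V = {ν ∈ Hom(ℤΓ, ℚ) : ⟨ν, σ⟩ ≤ 0 for all σ ∈ Σ}`. -/
def goodSubset {V : Type*} [AddCommGroup V] [Module ℚ V]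
    (coroot : V → V →ₗ[ℚ] ℚ) (Γ : AddSubmonoid V) (Sig : Set V) (F : Finset V) : Prop :=
  ∃ ν ∈ coneRelintFam F (fun α => (coroot α).domRestrict (Submodule.span ℚ (Γ : Set V))),
    ∀ x : Submodule.span ℚ (Γ : Set V), (x : V) ∈ Sig → ν x ≤ 0

theorem good_empty {V : Type*} [AddCommGroup V] [Module ℚ V]
    (coroot : V → V →ₗ[ℚ] ℚ) (Γ : AddSubmonoid V) (Sig : Set V) :
    goodSubset coroot Γ Sig ∅ := by
  refine ⟨0, ⟨fun _ => 1, by simp, by simp⟩, fun x hx => le_refl 0⟩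

theorem good_union {V : Type*} [AddCommGroup V] [Module ℚ V]
    (coroot : V → V →ₗ[ℚ] ℚ) (Γ : AddSubmonoid V) (Sig : Set V) [DecidableEq V] {F₁ F₂ : Finset V}
    (h₁ : goodSubset coroot Γ Sig F₁) (h₂ : goodSubset coroot Γ Sig F₂) :
    goodSubset coroot Γ Sig (F₁ ∪ F₂) := by
  classical
  obtain ⟨ν₁, ⟨c₁, hc₁, rfl⟩, hn₁⟩ := h₁
  obtain ⟨ν₂, ⟨c₂, hc₂, rfl⟩, hn₂⟩ := h₂
  refine ⟨_ + _, ⟨fun i => (if i ∈ F₁ then c₁ i else 0) + (if i ∈ F₂ then c₂ i else 0),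
    fun i hi => ?_, ?_⟩, fun x hx => add_nonpos (hn₁ x hx) (hn₂ x hx)⟩
  · rcases Finset.mem_union.1 hi with h | h
    · exact add_pos_of_pos_of_nonneg (by simp [h, hc₁ i h]) (by split_ifs with h2; exacts [(hc₂ i h2).le, le_rfl])
    · exact add_pos_of_nonneg_of_pos (by split_ifs with h1; exacts [(hc₁ i h1).le, le_rfl]) (by simp [h, hc₂ i h])
  · simp only [add_smul, Finset.sum_add_distrib, ite_smul, zero_smul,
      Finset.sum_ite_mem, Finset.union_inter_cancel_left, Finset.union_inter_cancel_right]

/-- for a submonoid `Γ` of `Λ⁺` and any subset `Σ ⊆ ℤΓ`, among all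
subsets `F ⊆ S` such that the relative interior of the cone spanned by
`{α^∨|_{ℤΓ} : α ∈ F}` meets `V(Γ) = {ν : ⟨ν,σ⟩ ≤ 0 ∀ σ ∈ Σ}` there is a unique one,
`S_Γ`, containing all the others; moreover `S_Γ` is the union of all such `F`. -/
theorem exists_unique_max_goodSubset
    {V : Type*} [AddCommGroup V] [Module ℚ V] [FiniteDimensional ℚ V]
    (S : Finset V) (coroot : V → V →ₗ[ℚ] ℚ) (Λ : AddSubgroup V)
    (Γ : AddSubmonoid V)
    (hΓ : (Γ : Set V) ⊆ dominant S coroot Λ)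
    (Sig : Set V)
    (hSig : Sig ⊆ (AddSubgroup.closure (Γ : Set V) : Set V)) :
    (∃! Smax : Finset V, Smax ⊆ S ∧ goodSubset coroot Γ Sig Smax ∧
        ∀ F, F ⊆ S → goodSubset coroot Γ Sig F → F ⊆ Smax) ∧
    (∀ Smax : Finset V, (Smax ⊆ S ∧ goodSubset coroot Γ Sig Smax ∧
        ∀ F, F ⊆ S → goodSubset coroot Γ Sig F → F ⊆ Smax) →
      (Smax : Set V) = ⋃ F ∈ {F : Finset V | F ⊆ S ∧ goodSubset coroot Γ Sig F}, (F : Set V)) := by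
  classical
  set T := S.powerset.filter (goodSubset coroot Γ Sig) with hT
  set Smax := T.sup id with hSmax
  have h1 : Smax ⊆ S := Finset.sup_le fun F hF =>
    Finset.mem_powerset.1 (Finset.mem_filter.1 hF).1
  have h2 : goodSubset coroot Γ Sig Smax :=
    Finset.sup_induction (good_empty coroot Γ Sig)
      (fun a ha b hb => by
        rw [Finset.sup_eq_union]; exact good_union coroot Γ Sig ha hb)
      (fun F hF => (Finset.mem_filter.1 hF).2)
  have h3 : ∀ F, F ⊆ S → goodSubset coroot Γ Sig F → F ⊆ Smax := fun F hF hg => by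
    simpa using Finset.le_sup (f := id)
      (Finset.mem_filter.2 ⟨Finset.mem_powerset.2 hF, hg⟩)
  refine ⟨⟨Smax, ⟨h1, h2, h3⟩, fun S' ⟨h1', h2', h3'⟩ =>
    subset_antisymm (h3 S' h1' h2') (h3' Smax h1 h2)⟩, fun S' ⟨h1', h2', h3'⟩ => ?_⟩
  ext x
  simp only [Set.mem_iUnion, Set.mem_setOf_eq, Finset.mem_coe]
  exact ⟨fun hx => ⟨S', ⟨h1', h2'⟩, hx⟩, fun ⟨F, ⟨hFS, hFg⟩, hxF⟩ => h3' F hFS hFg hxF⟩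
end

section
/- Let Γ be a submonoid of Λ⁺, let σ ∈ S be a simple root with σ ∈ ℤΓ, let δ ∈ Hom(ℤΓ,ℤ) satisfy δ(Γ) ⊆ ℕ and δ(σ) = 1, and suppose there exists γ ∈ Γ with δ(γ) = 0 and ⟨σ^∨,γ⟩ > 0. Then the element γ' := 2γ − σ lies in ℤΓ ∩ Λ⁺ but not in Γ; in particular, Γ is not G-saturated. (This is the construction concluding the proof of Proposition 2.21: γ' is dominant, lies in ℤΓ, and satisfies δ(γ') = −1 < 0, so γ' ∉ Γ.) -/
/-- let `Γ ⊆ Λ⁺` be a submonoid, `σ ∈ S` a simple root with `σ ∈ ℤΓ`,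
and let `δ ∈ Hom(ℤΓ, ℤ)` (identified with a functional on the `ℚ`-span of `Γ` taking
integer values on `ℤΓ`) satisfy `δ(Γ) ⊆ ℕ` and `δ(σ) = 1`.  If there is `γ ∈ Γ` with
`δ(γ) = 0` and `⟨σ^∨, γ⟩ > 0`, then `γ' := 2γ − σ` lies in `ℤΓ ∩ Λ⁺` but not in `Γ`;
in particular `Γ` is not `G`-saturated. -/
theorem not_saturated_of_two_elt_aset
    {V : Type*} [AddCommGroup V] [Module ℚ V] [FiniteDimensional ℚ V]
    (S : Finset V) (coroot : V → V →ₗ[ℚ] ℚ) (Λ : AddSubgroup V)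
    -- context: simple roots lie in `Λ` (since `ℤΦ ⊆ Λ`)
    (hSΛ : ∀ α ∈ S, α ∈ Λ)
    -- context: pairings of coroots with elements of the weight lattice are integers
    (hint : ∀ α ∈ S, ∀ lam ∈ Λ, ∃ n : ℤ, coroot α lam = n)
    -- context: `⟨α^∨, α⟩ = 2` for every (simple) root
    (hself : ∀ α ∈ S, coroot α α = 2)
    -- context: `⟨α^∨, β⟩ ≤ 0` for distinct simple roots `α, β`
    (hoffdiag : ∀ α ∈ S, ∀ β ∈ S, α ≠ β → coroot α β ≤ 0)
    (Γ : AddSubmonoid V)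
    -- `Γ` is a submonoid of `Λ⁺`
    (hΓdom : (Γ : Set V) ⊆ dominant S coroot Λ)
    (σ : V) (hσS : σ ∈ S) (hσZ : σ ∈ AddSubgroup.closure (Γ : Set V))
    (δ : (Submodule.span ℚ (Γ : Set V)) →ₗ[ℚ] ℚ)
    -- `δ ∈ Hom(ℤΓ, ℤ)` with `δ(Γ) ⊆ ℕ`
    (hδint : ∀ x : Submodule.span ℚ (Γ : Set V),
        (x : V) ∈ AddSubgroup.closure (Γ : Set V) → ∃ n : ℤ, δ x = n)
    (hδN : ∀ x : Submodule.span ℚ (Γ : Set V), (x : V) ∈ Γ → ∃ n : ℕ, δ x = n)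
    -- `δ(σ) = 1`
    (hδσ : ∀ x : Submodule.span ℚ (Γ : Set V), (x : V) = σ → δ x = 1)
    (γ : V) (hγΓ : γ ∈ Γ)
    -- `δ(γ) = 0`
    (hγδ : ∀ x : Submodule.span ℚ (Γ : Set V), (x : V) = γ → δ x = 0)
    -- `⟨σ^∨, γ⟩ > 0`
    (hγσ : 0 < coroot σ γ) :
    ((2 : ℚ) • γ - σ ∈ AddSubgroup.closure (Γ : Set V)) ∧
    ((2 : ℚ) • γ - σ ∈ dominant S coroot Λ) ∧
    ((2 : ℚ) • γ - σ ∉ Γ) ∧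
    ¬ ((AddSubgroup.closure (Γ : Set V) : Set V) ∩ dominant S coroot Λ = (Γ : Set V)) := by
  have hγcl : γ ∈ AddSubgroup.closure (Γ : Set V) := AddSubgroup.subset_closure hγΓ
  have h2 : (2 : ℚ) • γ = γ + γ := by
    rw [two_smul]
  have hcl : (2 : ℚ) • γ - σ ∈ AddSubgroup.closure (Γ : Set V) := by
    rw [h2]; exact sub_mem (add_mem hγcl hγcl) hσZ
  have hγdom := hΓdom hγΓ
  have hdom : (2 : ℚ) • γ - σ ∈ dominant S coroot Λ := by
    constructor
    · rw [h2]; exact sub_mem (add_mem hγdom.1 hγdom.1) (hSΛ σ hσS)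
    · intro α hα
      have hval : coroot α ((2 : ℚ) • γ - σ) = 2 * coroot α γ - coroot α σ := by
        simp [map_sub, map_smul, smul_eq_mul]
      rw [hval]
      by_cases hασ : α = σ
      · subst hασ
        rw [hself α hα]
        obtain ⟨n, hn⟩ := hint α hα γ hγdom.1
        have : (1 : ℚ) ≤ n := by
          have : (0 : ℚ) < n := hn ▸ hγσ
          exact_mod_cast this
        rw [hn]; linarith
      · have h1 := hγdom.2 α hα
        have h2' := hoffdiag α hα σ hσS hασ
        linarith
  have hnotΓ : (2 : ℚ) • γ - σ ∉ Γ := by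
    intro hmem
    have hγsp : γ ∈ Submodule.span ℚ (Γ : Set V) := Submodule.subset_span hγΓ
    have hγ'sp : (2 : ℚ) • γ - σ ∈ Submodule.span ℚ (Γ : Set V) :=
      Submodule.subset_span hmem
    set xγ : Submodule.span ℚ (Γ : Set V) := ⟨γ, hγsp⟩
    set xγ' : Submodule.span ℚ (Γ : Set V) := ⟨(2 : ℚ) • γ - σ, hγ'sp⟩
    have hx : ((2 : ℚ) • xγ - xγ' : Submodule.span ℚ (Γ : Set V)) = ⟨σ, by
        have := sub_mem (Submodule.smul_mem _ (2:ℚ) hγsp) hγ'sp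
        simpa using this⟩ := by
      apply Subtype.ext
      simp [xγ, xγ']
    have h1 : δ ((2 : ℚ) • xγ - xγ') = 1 := hδσ _ (by rw [hx])
    have h0 : δ xγ = 0 := hγδ xγ rfl
    obtain ⟨n, hn⟩ := hδN xγ' hmem
    rw [map_sub, map_smul, h0, hn] at h1
    have : (0:ℚ) ≤ n := by exact_mod_cast n.zero_le
    simp at h1
    linarith
  refine ⟨hcl, hdom, hnotΓ, ?_⟩
  intro heq
  have hm : (2 : ℚ) • γ - σ ∈ (AddSubgroup.closure (Γ : Set V) : Set V) ∩ dominant S coroot Λ :=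
    Set.mem_inter hcl hdom
  rw [heq] at hm
  exact hnotΓ hm
end
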